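/- Let V be a real vector space of dimension 2n+1, let η be a linear functional on V and ω an alternating bilinear form on V. Then η ∧ ωⁿ ≠ 0 (as an alternating (2n+1)-form) if and only if the linear map ♭ : V → V*, ♭(X) = ω(X,·) + η(X)·η, is an isomorphism and there exists a vector R ∈ V with ω(R,·) = 0 and η(R) = 1. -/

import Mathlib

noncomputable section WedgeMachinery

variable {V : Type*} [AddCommGroup V] [Module ℝ V]

/-- Wedge product of real-valued alternating forms, via `AlternatingMap.domCoprod`
(the shuffle convention, with no factorial factors). -/
def altWedge {a b : ℕ} (α : V [⋀^Fin a]→ₗ[ℝ] ℝ) (β : V [⋀^Fin b]→ₗ[ℝ] ℝ) :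
    V [⋀^Fin (a + b)]→ₗ[ℝ] ℝ :=
  ((LinearMap.mul' ℝ ℝ).compAlternatingMap (α.domCoprod β)).domDomCongr finSumFinEquiv

/-- `n`-th wedge power of an alternating `2`-form. -/
def altPow (ω : V [⋀^Fin 2]→ₗ[ℝ] ℝ) : (n : ℕ) → V [⋀^Fin (2 * n)]→ₗ[ℝ] ℝ
  | 0 => AlternatingMap.constOfIsEmpty ℝ V (Fin 0) 1
  | n + 1 => altWedge (altPow ω n) ω

/-- A linear functional, regarded as an alternating `1`-form. -/
def alt1 (η : V →ₗ[ℝ] ℝ) : V [⋀^Fin 1]→ₗ[ℝ] ℝ :=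
  AlternatingMap.ofSubsingleton ℝ V ℝ 0 η

end WedgeMachinery

/-!
If a nonzero `X` has `ω(X,·) = 0` and `η X = 0`, then `η ∧ ωⁿ` vanishes on every tuple containing
`X`, in particular on every enumeration of a basis extending `X`, so `η ∧ ωⁿ = 0`. Such an `X` is
exactly what keeps `♭` from being injective, because `♭ X X = η(X)²`. In odd dimension `ω` is
degenerate, and a vector of its kernel outside `ker η` rescales to the Reeb vector.

Conversely, `ω` is nondegenerate on `ker η`, so `ker η` has a symplectic basis
`e₁, f₁, …, eₙ, fₙ`, and `(η ∧ ωⁿ)(R, e₁, f₁, …, eₙ, fₙ) = η(R) · ωⁿ(e₁, …, fₙ) = n!`: in the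
shuffle sum for `ωᵏ⁺¹ = ωᵏ ∧ ω`, the only shuffles that survive feed a single pair `(eᵢ, fᵢ)`
to `ω`, and each of these `k + 1` shuffles contributes `k!`.
-/

open Equiv Function

namespace AlternatingMap

variable {R M N : Type*} [CommSemiring R] [AddCommMonoid M] [Module R M] [AddCommMonoid N]
  [Module R N]

def toBilin (ω : M [⋀^Fin 2]→ₗ[R] N) : M →ₗ[R] M →ₗ[R] N :=
  LinearMap.mk₂ R (fun x y => ω ![x, y]) (fun _ _ _ => ω.map_vecCons_add _ _ _)
    (fun _ _ _ => ω.map_vecCons_smul _ _ _) (fun x _ _ => (ω.curryLeft x).map_vecCons_add _ _ _)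
    (fun _ x _ => (ω.curryLeft x).map_vecCons_smul _ _ _)

@[simp]
theorem toBilin_apply (ω : M [⋀^Fin 2]→ₗ[R] N) (x y : M) : ω.toBilin x y = ω ![x, y] := rfl

theorem isAlt_toBilin (ω : M [⋀^Fin 2]→ₗ[R] N) : ω.toBilin.IsAlt :=
  fun x => ω.map_eq_zero_of_eq ![x, x] (i := 0) (j := 1) rfl (by decide)

theorem apply_fin_two (ω : M [⋀^Fin 2]→ₗ[R] N) (v : Fin 2 → M) :
    ω v = ω.toBilin (v 0) (v 1) := by
  rw [toBilin_apply]
  congr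
  funext i
  fin_cases i <;> rfl

def Kills {ι : Type*} (γ : M [⋀^ι]→ₗ[R] N) (X : M) : Prop :=
  ∀ v : ι → M, X ∈ Set.range v → γ v = 0

theorem eq_zero_of_kills {K W ι : Type*} [Field K] [AddCommGroup W] [Module K W]
    [FiniteDimensional K W] [Fintype ι] (γ : W [⋀^ι]→ₗ[K] K)
    (hcard : Fintype.card ι = Module.finrank K W) {X : W} (hX : X ≠ 0) (hγ : γ.Kills X) :
    γ = 0 := by
  have hli : LinearIndepOn K id ({X} : Set W) := (linearIndepOn_singleton_iff K).mpr hX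
  let b := Module.Basis.extend hli
  refine b.ext_alternating fun v hv => hγ _ ?_
  have hbij : Bijective v := (Fintype.bijective_iff_injective_and_card v).mpr
    ⟨hv, by rw [hcard, Module.finrank_eq_card_basis b]⟩
  obtain ⟨j, hj⟩ := hbij.2 ⟨X, hli.subset_extend _ (Set.mem_singleton X)⟩
  exact ⟨j, (congrArg b hj).trans (Module.Basis.extend_apply_self hli _)⟩

end AlternatingMap

namespace LinearMap

structure IsSymplecticFamily {R M ι : Type*} [CommSemiring R] [AddCommMonoid M] [Module R M]
    (B : M →ₗ[R] M →ₗ[R] R) (Q : ι → Fin 2 → M) : Prop where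
  apply_pair : ∀ k, B (Q k 0) (Q k 1) = 1
  apply_of_ne : ∀ {k l}, k ≠ l → ∀ s t, B (Q k s) (Q l t) = 0

theorem IsSymplecticFamily.comp {R M ι κ : Type*} [CommSemiring R] [AddCommMonoid M]
    [Module R M] {B : M →ₗ[R] M →ₗ[R] R} {Q : ι → Fin 2 → M} (hQ : B.IsSymplecticFamily Q)
    {e : κ → ι} (he : Injective e) : B.IsSymplecticFamily (Q ∘ e) :=
  ⟨fun k => hQ.apply_pair (e k), fun hkl => hQ.apply_of_ne (he.ne hkl)⟩

namespace IsAlt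

open Module Submodule

variable {K W : Type*} [Field K] [AddCommGroup W] [Module K W] {B : W →ₗ[K] W →ₗ[K] K}

theorem injective_add_smulRight_self_iff (hB : B.IsAlt) (η : Dual K W) :
    Injective (B + η.smulRight η) ↔ ∀ X, B X = 0 → η X = 0 → X = 0 := by
  refine ⟨fun h X hBX hηX => h (by simp [hBX, hηX]), fun h => ?_⟩
  rw [← ker_eq_bot, Submodule.eq_bot_iff]
  intro X hX
  have hflat : B X + η X • η = 0 := by simpa using hX
  have hηX : η X = 0 := by simpa [hB.self_eq_zero] using congrArg (· X) hflat
  exact h X (by simpa [hηX] using hflat) hηX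

theorem restrict_ker_nondegenerate (hB : B.IsAlt) {η : Dual K W} {R : W} (hR : B R = 0)
    (hηR : η R = 1) (hrad : ∀ X, B X = 0 → η X = 0 → X = 0) :
    (BilinForm.restrict B (ker η)).Nondegenerate := by
  refine (IsRefl.nondegenerate_iff_separatingLeft (B := BilinForm.restrict B _)
    fun x y => hB.isRefl x y).mpr fun x hx => Subtype.ext (hrad x (ext fun v => ?_) x.2)
  have hv : v - η v • R ∈ ker η := by simp [hηR]
  have hxR : B x R = 0 := by rw [← hB.neg, hR, zero_apply, neg_zero]
  simpa [hxR] using hx ⟨_, hv⟩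

variable [FiniteDimensional K W]

theorem exists_ne_zero_eq_zero_of_odd_finrank [CharZero K] (hB : B.IsAlt)
    (hodd : Odd (finrank K W)) : ∃ X, X ≠ 0 ∧ B X = 0 := by
  by_contra! h
  have hsep : B.SeparatingLeft := fun x hx => by_contra fun hx0 => h x hx0 (ext hx)
  let b := finBasis K W
  refine (separatingLeft_iff_det_ne_zero b).mp hsep ?_
  have hskew : (toMatrix₂ b b B).transpose = -toMatrix₂ b b B := by
    ext i j
    simp [← hB.neg (b j) (b i)]
  have hdet := congrArg Matrix.det hskew
  rw [Matrix.det_transpose, Matrix.det_neg, Fintype.card_fin, hodd.neg_one_pow, neg_one_mul]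
    at hdet
  exact CharZero.eq_neg_self_iff.mp hdet

theorem exists_pair_restrict_orthogonal_nondegenerate (hB : B.IsAlt) (hnd : B.Nondegenerate)
    (hpos : 0 < finrank K W) :
    ∃ e f : W, B e f = 1 ∧
      (BilinForm.restrict B (BilinForm.orthogonal B (span K (Set.range ![e, f])))).Nondegenerate ∧
      finrank K (BilinForm.orthogonal B (span K (Set.range ![e, f]))) + 2 = finrank K W := by
  obtain ⟨e, he⟩ := finrank_pos_iff_exists_ne_zero.mp hpos
  obtain ⟨g, hg⟩ : ∃ g, B e g ≠ 0 := by
    by_contra! h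
    exact he (hnd.1 e h)
  set f := (B e g)⁻¹ • g
  have hef : B e f = 1 := by simp [f, hg]
  have hfe : B f e = -1 := by rw [← hB.neg e f, hef]
  set P := span K (Set.range ![e, f])
  have hcoord : ∀ a b : K, B e (a • e + b • f) = b ∧ B f (a • e + b • f) = -a := fun a b => by
    simp [hB.self_eq_zero, hef, hfe]
  have hdisj : Disjoint (BilinForm.orthogonal B P) P := by
    rw [disjoint_iff_inf_le]
    rintro x ⟨hxP', hxP⟩
    obtain ⟨c, rfl⟩ := (mem_span_range_iff_exists_fun K).mp hxP
    have hb := hxP' e (subset_span ⟨0, rfl⟩)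
    have ha := hxP' f (subset_span ⟨1, rfl⟩)
    simp only [Fin.sum_univ_two, Matrix.cons_val_zero, Matrix.cons_val_one] at ha hb ⊢
    simp only [(hcoord _ _).1, (hcoord _ _).2, neg_eq_zero] at ha hb
    simp [ha, hb]
  have hli : LinearIndependent K ![e, f] := LinearIndependent.pair_iff.mpr fun a b hab => by
    have := hcoord a b
    simp only [hab, map_zero] at this
    exact ⟨neg_eq_zero.mp this.2.symm, this.1.symm⟩
  refine ⟨e, f, hef, ?_, ?_⟩
  · refine BilinForm.nondegenerate_restrict_of_disjoint_orthogonal B hB.isRefl ?_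
    rwa [BilinForm.orthogonal_orthogonal hnd hB.isRefl]
  · have hP : finrank K P = 2 := by simpa using finrank_span_eq_card hli
    have := BilinForm.finrank_orthogonal hnd P
    have := Submodule.finrank_le P
    change finrank K (BilinForm.orthogonal B P) + 2 = _
    omega

theorem exists_isSymplecticFamily (hB : B.IsAlt) (hnd : B.Nondegenerate) {m : ℕ}
    (hm : finrank K W = 2 * m) : ∃ Q : Fin m → Fin 2 → W, B.IsSymplecticFamily Q := by
  induction m generalizing W with
  | zero => exact ⟨finZeroElim, ⟨finZeroElim, fun {k} => k.elim0⟩⟩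
  | succ m ih =>
    obtain ⟨e, f, hef, hnd', hdim⟩ :=
      exists_pair_restrict_orthogonal_nondegenerate hB hnd (by omega)
    set P := span K (Set.range ![e, f])
    obtain ⟨Q', hQ'⟩ := ih (B := BilinForm.restrict B (BilinForm.orthogonal B P))
      (fun x => hB x) hnd' (by omega)
    have horth : ∀ s (x : BilinForm.orthogonal B P), B (![e, f] s) x = 0 :=
      fun s x => x.2 _ (subset_span ⟨s, rfl⟩)
    refine ⟨Fin.cons ![e, f] fun k s => Q' k s, ⟨fun k => ?_, fun {k l} hkl s t => ?_⟩⟩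
    · cases k using Fin.cases with
      | zero => exact hef
      | succ k => exact hQ'.apply_pair k
    · cases k using Fin.cases <;> cases l using Fin.cases
      · exact absurd rfl hkl
      · exact horth s _
      · exact hB.isRefl _ _ (horth t _)
      · exact hQ'.apply_of_ne (fun h => hkl (congrArg _ h)) s t

end IsAlt

end LinearMap

theorem Equiv.Perm.modSumCongr_mk_eq_mk_iff {α β : Type*} [Finite α] [Finite β]
    (σ τ : Perm (α ⊕ β)) :
    (QuotientGroup.mk σ : ModSumCongr α β) = QuotientGroup.mk τ ↔
      Set.MapsTo (σ⁻¹ * τ) (Set.range Sum.inr) (Set.range Sum.inr) := by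
  rw [QuotientGroup.eq]
  refine ⟨?_, fun h => mem_sumCongrHom_range_of_perm_mapsTo_inl
    ((perm_mapsTo_inl_iff_mapsTo_inr _).mpr h)⟩
  rintro ⟨⟨σl, σr⟩, hσ⟩ _ ⟨b, rfl⟩
  exact ⟨σr b, by rw [← hσ]; rfl⟩

def pairIndex (m : ℕ) : Fin m × Fin 2 ≃ Fin (2 * m) :=
  finProdFinEquiv.trans (finCongr (Nat.mul_comm m 2))

-- `interleave Q = (Q 0 0, Q 0 1, Q 1 0, Q 1 1, …)`
def interleave {α : Type*} {m : ℕ} (Q : Fin m → Fin 2 → α) : Fin (2 * m) → α :=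
  uncurry Q ∘ (pairIndex m).symm

def blockIndex (n : ℕ) : Fin (n + 1) × Fin 2 ≃ Fin (2 * n) ⊕ Fin 2 :=
  (pairIndex (n + 1)).trans finSumFinEquiv.symm

def pairSwap {n : ℕ} (k : Fin (n + 1)) : Perm (Fin (2 * n) ⊕ Fin 2) :=
  (blockIndex n).permCongr (prodCongrLeft fun _ => swap k (Fin.last n))

section Interleave

variable {α : Type*} {n : ℕ}

@[simp]
theorem blockIndex_castSucc (k : Fin n) (s : Fin 2) :
    blockIndex n (k.castSucc, s) = Sum.inl (pairIndex n (k, s)) := by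
  rw [blockIndex, trans_apply, symm_apply_eq]
  ext
  simp [pairIndex]
  rfl

@[simp]
theorem blockIndex_last (s : Fin 2) : blockIndex n (Fin.last n, s) = Sum.inr s := by
  rw [blockIndex, trans_apply, symm_apply_eq]
  ext
  simp [pairIndex]
  exact add_comm _ _

theorem eq_last_of_blockIndex_mem_range_inr {l : Fin (n + 1)} {s : Fin 2}
    (h : blockIndex n (l, s) ∈ Set.range Sum.inr) : l = Fin.last n := by
  induction l using Fin.lastCases with
  | last => rfl
  | cast l => simp at h

/- The explicit `(m := 2 * n)` below keeps the index of `finSumFinEquiv` in the form produced by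
`altWedge (altPow ω n) ω`; left implicit, it is elaborated as `Nat.mul 2 n` and the lemmas no
longer fire there. -/
theorem interleave_finSumFinEquiv (Q : Fin (n + 1) → Fin 2 → α) (x : Fin (2 * n) ⊕ Fin 2) :
    interleave Q (finSumFinEquiv (m := 2 * n) x) = uncurry Q ((blockIndex n).symm x) := by
  simp [interleave, blockIndex]

theorem interleave_finSumFinEquiv_inl (Q : Fin (n + 1) → Fin 2 → α) (i : Fin (2 * n)) :
    interleave Q (finSumFinEquiv (m := 2 * n) (Sum.inl i)) =
      interleave (Q ∘ Fin.castSucc) i := by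
  obtain ⟨⟨k, s⟩, rfl⟩ := (pairIndex n).surjective i
  rw [interleave_finSumFinEquiv, ← blockIndex_castSucc, symm_apply_apply]
  simp [interleave]

theorem interleave_finSumFinEquiv_inr (Q : Fin (n + 1) → Fin 2 → α) (s : Fin 2) :
    interleave Q (finSumFinEquiv (m := 2 * n) (Sum.inr s)) = Q (Fin.last n) s := by
  rw [interleave_finSumFinEquiv, ← blockIndex_last, symm_apply_apply]
  rfl

theorem pairSwap_blockIndex (k l : Fin (n + 1)) (s : Fin 2) :
    pairSwap k (blockIndex n (l, s)) = blockIndex n (swap k (Fin.last n) l, s) := by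
  simp [pairSwap, permCongr_apply]

theorem pairSwap_inv (k : Fin (n + 1)) : (pairSwap k)⁻¹ = pairSwap k := by
  rw [inv_eq_iff_mul_eq_one]
  ext1 x
  obtain ⟨⟨l, s⟩, rfl⟩ := (blockIndex n).surjective x
  simp [pairSwap_blockIndex]

theorem sign_pairSwap (k : Fin (n + 1)) : Perm.sign (pairSwap k) = 1 := by
  simp [pairSwap, Perm.sign_prodCongrLeft]

theorem interleave_finSumFinEquiv_pairSwap (Q : Fin (n + 1) → Fin 2 → α) (k : Fin (n + 1))
    (x : Fin (2 * n) ⊕ Fin 2) :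
    interleave Q (finSumFinEquiv (m := 2 * n) (pairSwap k x)) =
      interleave (Q ∘ swap k (Fin.last n)) (finSumFinEquiv (m := 2 * n) x) := by
  obtain ⟨⟨l, s⟩, rfl⟩ := (blockIndex n).surjective x
  rw [pairSwap_blockIndex, interleave_finSumFinEquiv, interleave_finSumFinEquiv]
  simp

theorem mk_pairSwap_injective :
    Injective fun k : Fin (n + 1) =>
      (QuotientGroup.mk (pairSwap k) : Perm.ModSumCongr (Fin (2 * n)) (Fin 2)) := by
  intro k l hkl
  have h := (Perm.modSumCongr_mk_eq_mk_iff _ _).mp hkl ⟨0, rfl⟩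
  rw [Perm.mul_apply, pairSwap_inv, ← blockIndex_last, pairSwap_blockIndex, swap_apply_right,
    pairSwap_blockIndex] at h
  have := eq_last_of_blockIndex_mem_range_inr h
  rw [swap_apply_eq_iff, swap_apply_right] at this
  exact this.symm

end Interleave

section Wedge

variable {V : Type*} [AddCommGroup V] [Module ℝ V]

theorem altWedge_apply {a b : ℕ} (α : V [⋀^Fin a]→ₗ[ℝ] ℝ) (β : V [⋀^Fin b]→ₗ[ℝ] ℝ)
    (v : Fin (a + b) → V) :
    altWedge α β v = ∑ q : Perm.ModSumCongr (Fin a) (Fin b),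
      LinearMap.mul' ℝ ℝ
        (AlternatingMap.domCoprod.summand α β q fun i => v (finSumFinEquiv i)) := by
  simp [altWedge, map_sum]
  rfl

theorem mul'_domCoprod_summand_mk {a b : ℕ} (α : V [⋀^Fin a]→ₗ[ℝ] ℝ) (β : V [⋀^Fin b]→ₗ[ℝ] ℝ)
    (σ : Perm (Fin a ⊕ Fin b)) (u : Fin a ⊕ Fin b → V) :
    LinearMap.mul' ℝ ℝ (AlternatingMap.domCoprod.summand α β (QuotientGroup.mk σ) u) =
      Perm.sign σ * (α (fun i => u (σ (Sum.inl i))) * β (fun i => u (σ (Sum.inr i)))) := by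
  rw [AlternatingMap.domCoprod.summand_mk'', _root_.smul_apply, MultilinearMap.domDomCongr_apply,
    MultilinearMap.domCoprod_apply, Units.smul_def, map_zsmul, LinearMap.mul'_apply, zsmul_eq_mul]
  rfl

theorem altWedge_append {a b : ℕ} (α : V [⋀^Fin a]→ₗ[ℝ] ℝ) (β : V [⋀^Fin b]→ₗ[ℝ] ℝ)
    (u : Fin a → V) (w : Fin b → V) (hα : ∀ j, α.Kills (w j)) :
    altWedge α β (Fin.append u w) = α u * β w := by
  rw [altWedge_apply, Finset.sum_eq_single (QuotientGroup.mk 1)]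
  · rw [mul'_domCoprod_summand_mk]
    simp
  · intro q _ hq
    obtain ⟨σ, rfl⟩ := QuotientGroup.mk_surjective q
    rw [ne_eq, Perm.modSumCongr_mk_eq_mk_iff] at hq
    simp only [Set.MapsTo, not_forall] at hq
    obtain ⟨_, ⟨j, rfl⟩, hj⟩ := hq
    obtain ⟨i, hi⟩ : ∃ i, σ⁻¹ (Sum.inr j) = Sum.inl i := by
      cases h : σ⁻¹ (Sum.inr j) with
      | inl i => exact ⟨i, rfl⟩
      | inr i => exact absurd ⟨i, by rw [mul_one, h]⟩ hj
    rw [mul'_domCoprod_summand_mk, hα j _ ⟨i, by simp [← hi]⟩]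
    ring
  · simp

theorem AlternatingMap.Kills.altWedge {a b : ℕ} {α : V [⋀^Fin a]→ₗ[ℝ] ℝ}
    {β : V [⋀^Fin b]→ₗ[ℝ] ℝ} {X : V} (hα : α.Kills X) (hβ : β.Kills X) :
    (altWedge α β).Kills X := by
  rintro v ⟨j, rfl⟩
  rw [altWedge_apply]
  refine Finset.sum_eq_zero fun q _ => ?_
  obtain ⟨σ, rfl⟩ := QuotientGroup.mk_surjective q
  rw [mul'_domCoprod_summand_mk]
  cases h : σ⁻¹ (finSumFinEquiv.symm j) with
  | inl i => rw [hα _ ⟨i, by simp [← h]⟩]; ring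
  | inr i => rw [hβ _ ⟨i, by simp [← h]⟩]; ring

theorem kills_alt1 {η : V →ₗ[ℝ] ℝ} {X : V} (hX : η X = 0) : (alt1 η).Kills X := by
  rintro v ⟨i, rfl⟩
  rw [Subsingleton.elim i 0] at hX
  exact hX

theorem kills_of_toBilin_eq_zero {ω : V [⋀^Fin 2]→ₗ[ℝ] ℝ} {X : V} (hX : ω.toBilin X = 0) :
    ω.Kills X := by
  rintro v ⟨i, rfl⟩
  rw [ω.apply_fin_two]
  obtain rfl | rfl : i = 0 ∨ i = 1 := by fin_cases i <;> simp
  · rw [hX, LinearMap.zero_apply]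
  · rw [← ω.isAlt_toBilin.neg, hX, LinearMap.zero_apply, neg_zero]

theorem kills_altPow {ω : V [⋀^Fin 2]→ₗ[ℝ] ℝ} {X : V} (hX : ω.toBilin X = 0) (n : ℕ) :
    (altPow ω n).Kills X := by
  induction n with
  | zero => rintro v ⟨i, -⟩; exact i.elim0
  | succ n ih => exact ih.altWedge (kills_of_toBilin_eq_zero hX)

variable {ω : V [⋀^Fin 2]→ₗ[ℝ] ℝ}

theorem exists_mk_pairSwap_eq {n : ℕ} {Q : Fin (n + 1) → Fin 2 → V}
    (hQ : ω.toBilin.IsSymplecticFamily Q) (σ : Perm (Fin (2 * n) ⊕ Fin 2))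
    (hσ : ω (fun t => interleave Q (finSumFinEquiv (m := 2 * n) (σ (Sum.inr t)))) ≠ 0) :
    ∃ k, (QuotientGroup.mk (pairSwap k) : Perm.ModSumCongr (Fin (2 * n)) (Fin 2)) =
      QuotientGroup.mk σ := by
  set p := fun t => (blockIndex n).symm (σ (Sum.inr t))
  have hσp : ∀ t, σ (Sum.inr t) = blockIndex n (p t) := fun t => by simp [p]
  rw [ω.apply_fin_two] at hσ
  simp only [interleave_finSumFinEquiv] at hσ
  have hp : ∀ t, (p t).1 = (p 0).1 := by
    have h10 : (p 1).1 = (p 0).1 := by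
      by_contra h
      exact hσ (hQ.apply_of_ne (Ne.symm h) _ _)
    intro t
    fin_cases t
    · rfl
    · exact h10
  refine ⟨(p 0).1, (Perm.modSumCongr_mk_eq_mk_iff _ _).mpr ?_⟩
  rintro _ ⟨t, rfl⟩
  rw [Perm.mul_apply, pairSwap_inv, hσp, ← hp t, pairSwap_blockIndex, swap_apply_left,
    blockIndex_last]
  exact ⟨_, rfl⟩

theorem altPow_interleave : ∀ {m : ℕ} {Q : Fin m → Fin 2 → V},
    ω.toBilin.IsSymplecticFamily Q → altPow ω m (interleave Q) = m.factorial
  | 0, _, _ => by simp [altPow]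
  | n + 1, Q, hQ => by
    change altWedge (altPow ω n) ω (interleave Q) = _
    rw [altWedge_apply]
    refine (Fintype.sum_of_injective _ mk_pairSwap_injective (fun _ => (n.factorial : ℝ)) _
      ?_ ?_).symm.trans (by simp [Nat.factorial_succ])
    · intro q hq
      obtain ⟨σ, rfl⟩ := QuotientGroup.mk_surjective q
      rw [mul'_domCoprod_summand_mk]
      by_contra h
      exact hq (exists_mk_pairSwap_eq hQ σ fun h0 => h (by rw [h0]; ring))
    · intro k
      rw [mul'_domCoprod_summand_mk, sign_pairSwap]
      simp only [interleave_finSumFinEquiv_pairSwap, interleave_finSumFinEquiv_inl,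
        interleave_finSumFinEquiv_inr, comp_apply, swap_apply_right,
        altPow_interleave ((hQ.comp (swap k _).injective).comp (Fin.castSucc_injective n))]
      rw [ω.apply_fin_two, hQ.apply_pair]
      simp

end Wedge

section FiniteDimensional

variable {V : Type*} [AddCommGroup V] [Module ℝ V] [FiniteDimensional ℝ V] {n : ℕ}
  {η : Module.Dual ℝ V} {ω : V [⋀^Fin 2]→ₗ[ℝ] ℝ}

theorem eq_zero_of_altWedge_ne_zero (hdim : Module.finrank ℝ V = 2 * n + 1)
    (hW : altWedge (alt1 η) (altPow ω n) ≠ 0) {X : V} (hωX : ω.toBilin X = 0) (hηX : η X = 0) :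
    X = 0 := by
  by_contra hX
  exact hW (AlternatingMap.eq_zero_of_kills _ (by simp [hdim, add_comm]) hX
    ((kills_alt1 hηX).altWedge (kills_altPow hωX n)))

theorem altWedge_ne_zero (hdim : Module.finrank ℝ V = 2 * n + 1)
    (hrad : ∀ X, ω.toBilin X = 0 → η X = 0 → X = 0) {R : V} (hR : ω.toBilin R = 0)
    (hηR : η R = 1) : altWedge (alt1 η) (altPow ω n) ≠ 0 := by
  have hker : Module.finrank ℝ (LinearMap.ker η) = 2 * n := by
    have := LinearMap.finrank_range_add_finrank_ker η
    rw [LinearMap.range_eq_top.mpr fun c => ⟨c • R, by simp [hηR]⟩, finrank_top,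
      Module.finrank_self, hdim] at this
    omega
  obtain ⟨Q, hQ⟩ := LinearMap.IsAlt.exists_isSymplecticFamily
    (B := LinearMap.BilinForm.restrict ω.toBilin (LinearMap.ker η)) (fun x => ω.isAlt_toBilin x)
    (ω.isAlt_toBilin.restrict_ker_nondegenerate hR hηR hrad) hker
  have hQV : ω.toBilin.IsSymplecticFamily fun k s => (Q k s : V) :=
    ⟨hQ.apply_pair, hQ.apply_of_ne⟩
  have hval := altWedge_append (alt1 η) (altPow ω n) ![R] (interleave fun k s => (Q k s : V))
    fun j => kills_alt1 (LinearMap.mem_ker.mp (Q _ _).2)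
  intro h0
  rw [h0, altPow_interleave hQV] at hval
  simp [alt1, hηR, eq_comm, Nat.factorial_ne_zero] at hval

end FiniteDimensional

/-- On a `(2n+1)`-dimensional real vector space `V`, one has `η ∧ ωⁿ ≠ 0`
if and only if the musical map `♭(X) = ω(X,·) + η(X)·η` is a linear isomorphism and there
exists a vector `R` with `ω(R,·) = 0` and `η R = 1`. -/
theorem almost_cosymplectic_iff_flat_iso_and_reeb {V : Type*} [AddCommGroup V] [Module ℝ V]
    [FiniteDimensional ℝ V] {n : ℕ} (hdim : Module.finrank ℝ V = 2 * n + 1)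
    (η : Module.Dual ℝ V) (ω : V [⋀^Fin 2]→ₗ[ℝ] ℝ) :
    altWedge (alt1 η) (altPow ω n) ≠ 0 ↔
      ((∃ e : V ≃ₗ[ℝ] Module.Dual ℝ V, ∀ X v : V, e X v = ω ![X, v] + η X * η v) ∧
        ∃ R : V, (∀ v : V, ω ![R, v] = 0) ∧ η R = 1) := by
  have hB := ω.isAlt_toBilin
  constructor
  · intro hW
    have hinj : Injective (ω.toBilin + η.smulRight η) :=
      (hB.injective_add_smulRight_self_iff η).mpr fun _ => eq_zero_of_altWedge_ne_zero hdim hW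
    have hsurj : Surjective (ω.toBilin + η.smulRight η) :=
      (LinearMap.injective_iff_surjective_of_finrank_eq_finrank
        Subspace.dual_finrank_eq.symm).mp hinj
    obtain ⟨X, hX, hωX⟩ :=
      hB.exists_ne_zero_eq_zero_of_odd_finrank (by rw [hdim]; exact odd_two_mul_add_one n)
    have hηX : η X ≠ 0 := fun h => hX (eq_zero_of_altWedge_ne_zero hdim hW hωX h)
    refine ⟨⟨LinearEquiv.ofBijective _ ⟨hinj, hsurj⟩, fun _ _ => rfl⟩, (η X)⁻¹ • X, fun v => ?_,
      by simp [hηX]⟩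
    change ω.toBilin ((η X)⁻¹ • X) v = 0
    simp [hωX]
  · rintro ⟨⟨e, he⟩, R, hR, hηR⟩
    have hflat : ω.toBilin + η.smulRight η = e := LinearMap.ext₂ fun X v => (he X v).symm
    have hinj : Injective (ω.toBilin + η.smulRight η) := by rw [hflat]; exact e.injective
    exact altWedge_ne_zero hdim ((hB.injective_add_smulRight_self_iff η).mp hinj)
      (LinearMap.ext hR) hηR
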